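/- Let S be a finite measure space and n ≥ 1. The Nemytskij operator Q : L²(S; ℝ₊*) × L²(S; ℝⁿ) → L²(S; ℝⁿ), defined by Q(α, z)(x) = q(α(x), z(x)) where q(a, w) is the projection of w onto the ball B(0, a) in ℝⁿ, is directionally differentiable: for every (α, z) in its domain and every direction (β, h) ∈ L²(S) × L²(S; ℝⁿ), the difference quotients (Q(α + tβ, z + th) − Q(α, z))/t converge strongly in L²(S; ℝⁿ) as t → 0⁺ to the function x ↦ dq((α(x), z(x)); (β(x), h(x))), where dq is the pointwise directional derivative of q. -/

import Mathlib

open Filter Topology MeasureTheory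

/-- The Euclidean projection of `w ∈ ℝⁿ` onto the closed ball `B(0, a)`. -/
noncomputable def ballProj {n : ℕ} (a : ℝ) (w : EuclideanSpace ℝ (Fin n)) :
    EuclideanSpace ℝ (Fin n) :=
  if ‖w‖ ≤ a then w else (a / ‖w‖) • w

/-- The pointwise directional derivative of the ball projection at `(a, w)` in the
direction `(b, k)`. -/
noncomputable def ballProjDeriv {n : ℕ} (a : ℝ) (w : EuclideanSpace ℝ (Fin n)) (b : ℝ)
    (k : EuclideanSpace ℝ (Fin n)) : EuclideanSpace ℝ (Fin n) :=
  if ‖w‖ < a then k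
  else if ‖w‖ = a then
    k - (max 0 ((inner ℝ k (‖w‖⁻¹ • w) : ℝ) - b)) • (‖w‖⁻¹ • w)
  else (a / ‖w‖) • (k - ((‖w‖ ^ 2)⁻¹ * (inner ℝ w k : ℝ)) • w) + (b / ‖w‖) • w

/-!
For `0 ≤ a`, `ballProj a` is the metric projection onto a convex set, hence 1-Lipschitz, and
`c ↦ ballProj c u` is 1-Lipschitz as well; so `‖ballProj c u - ballProj a v‖ ≤ |c - a| + ‖u - v‖`
and the difference quotients are dominated by `|β| + ‖h‖ ∈ L²`. Pointwise they converge to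
`ballProjDeriv`: inside the ball the quotient is eventually `k`, outside it `ballProj` is smooth,
and on the sphere everything is governed by the excess `‖w + t • k‖ - (a + t * b)`, whose right
derivative at `0` is `⟪k, w / ‖w‖⟫ - b`. Dominated convergence in `L²` concludes.
-/

open RealInnerProductSpace
open scoped ENNReal

theorem tendsto_eLpNorm_of_dominated_convergence {α ι E : Type*} [MeasurableSpace α]
    {μ : Measure α} [NormedAddCommGroup E] {l : Filter ι} [l.IsCountablyGenerated]
    {p : ℝ≥0∞} (hp : p ≠ ∞) {F : ι → α → E} {g : α → ℝ}
    (hF : ∀ᶠ i in l, AEStronglyMeasurable (F i) μ) (hg : MemLp g p μ)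
    (hbound : ∀ᶠ i in l, ∀ᵐ x ∂μ, ‖F i x‖ ≤ g x)
    (hlim : ∀ᵐ x ∂μ, Tendsto (fun i => F i x) l (𝓝 0)) :
    Tendsto (fun i => eLpNorm (F i) p μ) l (𝓝 0) := by
  rcases eq_or_ne p 0 with rfl | hp0
  · simpa using tendsto_const_nhds
  simp only [eLpNorm_eq_lintegral_rpow_enorm_toReal hp0 hp]
  have hpos : 0 < p.toReal := ENNReal.toReal_pos hp0 hp
  have hint : Tendsto (fun i => ∫⁻ x, ‖F i x‖ₑ ^ p.toReal ∂μ) l (𝓝 0) := by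
    simpa using tendsto_lintegral_filter_of_dominated_convergence' (f := fun _ => 0)
      (fun x => ‖g x‖ₑ ^ p.toReal)
      (hF.mono fun i hi => hi.enorm.pow_const _)
      (hbound.mono fun i hi => hi.mono fun x hx =>
        ENNReal.rpow_le_rpow (enorm_le_iff_norm_le.2 (hx.trans (Real.le_norm_self _))) hpos.le)
      (lintegral_rpow_enorm_lt_top_of_eLpNorm_lt_top hp0 hp hg.eLpNorm_lt_top).ne
      (hlim.mono fun x hx => by simpa [hpos] using hx.enorm.ennrpow_const p.toReal)
  simpa [hpos] using hint.ennrpow_const (1 / p.toReal)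

theorem HasDerivAt.norm {F : Type*} [NormedAddCommGroup F] [InnerProductSpace ℝ F]
    {f : ℝ → F} {f' : F} {x : ℝ} (hf : HasDerivAt f f' x) (h0 : f x ≠ 0) :
    HasDerivAt (‖f ·‖) (⟪f x, f'⟫ / ‖f x‖) x := by
  have hsq := hf.norm_sq.sqrt (by simpa using h0)
  simp only [Real.sqrt_sq (norm_nonneg _)] at hsq
  convert hsq using 1
  field_simp

theorem hasDerivAt_add_smul {F : Type*} [NormedAddCommGroup F] [NormedSpace ℝ F] (w k : F) :
    HasDerivAt (fun t : ℝ => w + t • k) k 0 := by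
  simpa using ((hasDerivAt_id (0 : ℝ)).smul_const k).const_add w

section BallProj

variable {n : ℕ}
local notation "E" => EuclideanSpace ℝ (Fin n)

theorem ballProj_of_norm_le {a : ℝ} {w : E} (h : ‖w‖ ≤ a) : ballProj a w = w := if_pos h

theorem ballProj_of_lt_norm {a : ℝ} {w : E} (h : a < ‖w‖) : ballProj a w = (a / ‖w‖) • w :=
  if_neg h.not_ge

theorem ballProj_eq_min_div_smul (a : ℝ) (w : E) : ballProj a w = (min ‖w‖ a / ‖w‖) • w := by
  rcases eq_or_ne w 0 with rfl | hw
  · simp [ballProj]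
  rcases le_or_gt ‖w‖ a with h | h
  · rw [ballProj_of_norm_le h, min_eq_left h, div_self (norm_ne_zero_iff.2 hw), one_smul]
  · rw [ballProj_of_lt_norm h, min_eq_right h.le]

theorem ballProj_eq_sub_smul (a : ℝ) (w : E) :
    ballProj a w = w - (max 0 (‖w‖ - a) / ‖w‖) • w := by
  rcases eq_or_ne w 0 with rfl | hw
  · simp [ballProj]
  rcases le_or_gt ‖w‖ a with h | h
  · rw [ballProj_of_norm_le h, max_eq_left (sub_nonpos.2 h), zero_div, zero_smul, sub_zero]
  · rw [ballProj_of_lt_norm h, max_eq_right (sub_pos.2 h).le, sub_div,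
      div_self (norm_ne_zero_iff.2 hw), sub_smul, one_smul, sub_sub_cancel]

theorem norm_ballProj_le {a : ℝ} (ha : 0 ≤ a) (w : E) : ‖ballProj a w‖ ≤ a := by
  rcases eq_or_ne w 0 with rfl | hw
  · simpa [ballProj] using ha
  rw [ballProj_eq_min_div_smul, norm_smul, Real.norm_eq_abs, abs_div, abs_norm,
    div_mul_cancel₀ _ (norm_ne_zero_iff.2 hw), abs_of_nonneg (le_min (norm_nonneg _) ha)]
  exact min_le_right _ _

theorem norm_ballProj_sub_ballProj_le_abs_sub (a c : ℝ) (w : E) :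
    ‖ballProj c w - ballProj a w‖ ≤ |c - a| := by
  rcases eq_or_ne w 0 with rfl | hw
  · simp [ballProj]
  rw [ballProj_eq_min_div_smul, ballProj_eq_min_div_smul, ← sub_smul, ← sub_div, norm_smul,
    Real.norm_eq_abs, abs_div, abs_norm, div_mul_cancel₀ _ (norm_ne_zero_iff.2 hw)]
  simpa using abs_min_sub_min_le_max ‖w‖ c ‖w‖ a

theorem inner_sub_ballProj_sub_ballProj_nonpos {a : ℝ} (w : E) {y : E} (hy : ‖y‖ ≤ a) :
    ⟪w - ballProj a w, y - ballProj a w⟫ ≤ 0 := by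
  rcases le_or_gt ‖w‖ a with h | h
  · rw [ballProj_of_norm_le h, sub_self, inner_zero_left]
  have hw : 0 < ‖w‖ := (norm_nonneg y).trans_lt (hy.trans_lt h)
  have hsub : w - (a / ‖w‖) • w = (1 - a / ‖w‖) • w := by rw [sub_smul, one_smul]
  rw [ballProj_of_lt_norm h, hsub, real_inner_smul_left, inner_sub_right,
    real_inner_smul_right, real_inner_self_eq_norm_sq]
  refine mul_nonpos_of_nonneg_of_nonpos (sub_nonneg.2 ((div_le_one hw).2 h.le)) ?_
  have hwy : ⟪w, y⟫ ≤ ‖w‖ * a := (real_inner_le_norm w y).trans (by gcongr)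
  have : a / ‖w‖ * ‖w‖ ^ 2 = ‖w‖ * a := by field_simp
  linarith

theorem norm_ballProj_sub_ballProj_le {a : ℝ} (ha : 0 ≤ a) (u v : E) :
    ‖ballProj a u - ballProj a v‖ ≤ ‖u - v‖ := by
  set p := ballProj a u
  set q := ballProj a v
  have hu := inner_sub_ballProj_sub_ballProj_nonpos u (norm_ballProj_le ha v)
  have hv := inner_sub_ballProj_sub_ballProj_nonpos v (norm_ballProj_le ha u)
  -- the two variational inequalities add up to firm nonexpansiveness
  have hpq : ‖p - q‖ ^ 2 ≤ ⟪u - v, p - q⟫ := by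
    rw [← real_inner_self_eq_norm_sq]
    have : ⟪u - v, p - q⟫ - ⟪p - q, p - q⟫ = -(⟪u - p, q - p⟫ + ⟪v - q, p - q⟫) := by
      simp only [inner_sub_left, inner_sub_right, real_inner_comm]
      ring
    linarith
  nlinarith [real_inner_le_norm (u - v) (p - q), norm_nonneg (p - q), norm_nonneg (u - v)]

theorem norm_ballProj_sub_ballProj_le_add {a : ℝ} (ha : 0 ≤ a) (c : ℝ) (u v : E) :
    ‖ballProj c u - ballProj a v‖ ≤ |c - a| + ‖u - v‖ :=
  (norm_sub_le_norm_sub_add_norm_sub _ (ballProj a u) _).trans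
    (add_le_add (norm_ballProj_sub_ballProj_le_abs_sub a c u)
      (norm_ballProj_sub_ballProj_le ha u v))

theorem norm_smul_ballProj_sub_le {a t : ℝ} (ha : 0 ≤ a) (ht : 0 < t) (w : E) (b : ℝ) (k : E) :
    ‖t⁻¹ • (ballProj (a + t * b) (w + t • k) - ballProj a w)‖ ≤ |b| + ‖k‖ := by
  rw [norm_smul, Real.norm_eq_abs, abs_inv, abs_of_pos ht, inv_mul_le_iff₀ ht]
  calc _ ≤ |a + t * b - a| + ‖w + t • k - w‖ := norm_ballProj_sub_ballProj_le_add ha _ _ _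
    _ = t * (|b| + ‖k‖) := by
      rw [add_sub_cancel_left, add_sub_cancel_left, abs_mul, norm_smul, Real.norm_eq_abs,
        abs_of_pos ht, mul_add]

theorem measurable_ballProj : Measurable (Function.uncurry (ballProj (n := n))) := by
  refine Measurable.ite (measurableSet_le (by fun_prop) (by fun_prop)) (by fun_prop) ?_
  fun_prop

theorem AEMeasurable.ballProj {S : Type*} [MeasurableSpace S] {μ : Measure S} {c : S → ℝ}
    {u : S → E} (hc : AEMeasurable c μ) (hu : AEMeasurable u μ) :
    AEMeasurable (fun x => _root_.ballProj (c x) (u x)) μ := by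
  have hcomp := measurable_ballProj.comp_aemeasurable (hc.prodMk hu)
  exact hcomp

theorem tendsto_ballProj_slope_of_norm_lt {a : ℝ} {w : E} (hw : ‖w‖ < a) (b : ℝ) (k : E) :
    Tendsto (fun t : ℝ => t⁻¹ • (ballProj (a + t * b) (w + t • k) - ballProj a w))
      (𝓝[>] 0) (𝓝 k) := by
  have hinside : ∀ᶠ t in 𝓝 (0 : ℝ), ‖w + t • k‖ < a + t * b :=
    ContinuousAt.eventually_lt (by fun_prop) (by fun_prop) (by simpa using hw)
  refine tendsto_const_nhds.congr' ?_
  filter_upwards [nhdsWithin_le_nhds hinside, self_mem_nhdsWithin] with t hlt (ht : 0 < t)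
  rw [ballProj_of_norm_le hlt.le, ballProj_of_norm_le hw.le, add_sub_cancel_left, smul_smul,
    inv_mul_cancel₀ ht.ne', one_smul]

theorem tendsto_ballProj_slope_of_lt_norm {a : ℝ} {w : E} (ha : 0 ≤ a) (hw : a < ‖w‖)
    (b : ℝ) (k : E) :
    Tendsto (fun t : ℝ => t⁻¹ • (ballProj (a + t * b) (w + t • k) - ballProj a w)) (𝓝[>] 0)
      (𝓝 ((a / ‖w‖) • (k - ((‖w‖ ^ 2)⁻¹ * ⟪w, k⟫) • w) + (b / ‖w‖) • w)) := by
  have hw0 : 0 < ‖w‖ := ha.trans_lt hw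
  have hradius : HasDerivAt (fun t : ℝ => a + t * b) b 0 := by
    simpa using ((hasDerivAt_id (0 : ℝ)).mul_const b).const_add a
  have hnorm := (hasDerivAt_add_smul w k).norm (by simpa using hw0.ne')
  have hscaled : HasDerivAt (fun t : ℝ => ((a + t * b) / ‖w + t • k‖) • (w + t • k))
      ((a / ‖w‖) • (k - ((‖w‖ ^ 2)⁻¹ * ⟪w, k⟫) • w) + (b / ‖w‖) • w) 0 := by
    refine ((hradius.div hnorm (by simpa using hw0.ne')).smul
      (hasDerivAt_add_smul w k)).congr_deriv ?_
    simp only [Pi.div_apply, zero_smul, add_zero, zero_mul]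
    match_scalars
    · field_simp
    · field_simp
      ring
  have houtside : ∀ᶠ t in 𝓝 (0 : ℝ), a + t * b < ‖w + t • k‖ :=
    ContinuousAt.eventually_lt (by fun_prop) (by fun_prop) (by simpa using hw)
  have heq : (fun t : ℝ => ballProj (a + t * b) (w + t • k)) =ᶠ[𝓝 0]
      fun t => ((a + t * b) / ‖w + t • k‖) • (w + t • k) :=
    houtside.mono fun t ht => ballProj_of_lt_norm ht
  simpa only [zero_add, zero_mul, add_zero, zero_smul] using
    (hscaled.congr_of_eventuallyEq heq).tendsto_slope_zero_right

theorem tendsto_ballProj_slope_of_norm_eq {a : ℝ} {w : E} (ha : 0 < a) (hw : ‖w‖ = a)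
    (b : ℝ) (k : E) :
    Tendsto (fun t : ℝ => t⁻¹ • (ballProj (a + t * b) (w + t • k) - ballProj a w)) (𝓝[>] 0)
      (𝓝 (k - max 0 (⟪k, ‖w‖⁻¹ • w⟫ - b) • (‖w‖⁻¹ • w))) := by
  have hw0 : 0 < ‖w‖ := hw ▸ ha
  have hradius : HasDerivAt (fun t : ℝ => a + t * b) b 0 := by
    simpa using ((hasDerivAt_id (0 : ℝ)).mul_const b).const_add a
  have hnorm := (hasDerivAt_add_smul w k).norm (by simpa using hw0.ne')
  have hexcess : Tendsto (fun t : ℝ => t⁻¹ * (‖w + t • k‖ - (a + t * b))) (𝓝[>] 0)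
      (𝓝 (⟪w, k⟫ / ‖w‖ - b)) := by
    simpa [hw] using (hnorm.sub hradius).tendsto_slope_zero_right
  have hcurve : Tendsto (fun t : ℝ => w + t • k) (𝓝[>] 0) (𝓝 w) :=
    ((continuous_const.add (continuous_id.smul continuous_const)).tendsto' 0 w (by simp)).mono_left
      nhdsWithin_le_nhds
  have hlim : Tendsto
      (fun t : ℝ => k - (max 0 (t⁻¹ * (‖w + t • k‖ - (a + t * b))) / ‖w + t • k‖) • (w + t • k))
      (𝓝[>] 0) (𝓝 (k - (max 0 (⟪w, k⟫ / ‖w‖ - b) / ‖w‖) • w)) :=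
    tendsto_const_nhds.sub (((tendsto_const_nhds.max hexcess).div hcurve.norm hw0.ne').smul hcurve)
  have hval : k - max 0 (⟪k, ‖w‖⁻¹ • w⟫ - b) • (‖w‖⁻¹ • w)
      = k - (max 0 (⟪w, k⟫ / ‖w‖ - b) / ‖w‖) • w := by
    rw [real_inner_smul_right, real_inner_comm, smul_smul, inv_mul_eq_div, div_eq_mul_inv (max _ _)]
  rw [hval]
  refine hlim.congr' ?_
  filter_upwards [self_mem_nhdsWithin] with t (ht : 0 < t)
  have hmax (x : ℝ) : max 0 (t⁻¹ * x) = t⁻¹ * max 0 x := by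
    rw [mul_max_of_nonneg _ _ (inv_nonneg.2 ht.le), mul_zero]
  rw [ballProj_eq_sub_smul (a + t * b), ballProj_of_norm_le hw.le, hmax]
  match_scalars <;> field_simp
  ring

theorem tendsto_ballProj_slope {a : ℝ} (ha : 0 < a) (w : E) (b : ℝ) (k : E) :
    Tendsto (fun t : ℝ => t⁻¹ • (ballProj (a + t * b) (w + t • k) - ballProj a w)) (𝓝[>] 0)
      (𝓝 (ballProjDeriv a w b k)) := by
  unfold ballProjDeriv
  split_ifs with hlt heq
  · exact tendsto_ballProj_slope_of_norm_lt hlt b k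
  · exact tendsto_ballProj_slope_of_norm_eq ha heq b k
  · exact tendsto_ballProj_slope_of_lt_norm ha.le
      (lt_of_le_of_ne (not_lt.1 hlt) (Ne.symm heq)) b k

theorem norm_ballProjDeriv_le {a : ℝ} (ha : 0 < a) (w : E) (b : ℝ) (k : E) :
    ‖ballProjDeriv a w b k‖ ≤ |b| + ‖k‖ :=
  le_of_tendsto (tendsto_ballProj_slope ha w b k).norm <|
    eventually_mem_nhdsWithin.mono fun _ ht => norm_smul_ballProj_sub_le ha.le ht w b k

end BallProj

theorem nemytskij_ballProj_dirDiff_general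
    {S : Type*} [MeasurableSpace S] (μ : Measure S)
    (n : ℕ)
    (α : S → ℝ) (hαpos : ∀ x, 0 < α x) (hα : MemLp α 2 μ)
    (z : S → EuclideanSpace ℝ (Fin n)) (hz : MemLp z 2 μ)
    (β : S → ℝ) (hβ : MemLp β 2 μ)
    (h : S → EuclideanSpace ℝ (Fin n)) (hh : MemLp h 2 μ) :
    Tendsto
      (fun t : ℝ => eLpNorm
        (fun x => t⁻¹ • (ballProj (α x + t * β x) (z x + t • h x) - ballProj (α x) (z x))
          - ballProjDeriv (α x) (z x) (β x) (h x)) 2 μ)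
      (𝓝[>] (0 : ℝ)) (𝓝 0) := by
  set Q : ℝ → S → EuclideanSpace ℝ (Fin n) := fun t x =>
    t⁻¹ • (ballProj (α x + t * β x) (z x + t • h x) - ballProj (α x) (z x))
  have hQlim (x : S) : Tendsto (Q · x) (𝓝[>] 0) (𝓝 (ballProjDeriv (α x) (z x) (β x) (h x))) :=
    tendsto_ballProj_slope (hαpos x) (z x) (β x) (h x)
  have hQmeas (t : ℝ) : AEStronglyMeasurable (Q t) μ := by
    have hα' := hα.aestronglyMeasurable.aemeasurable
    have hz' := hz.aestronglyMeasurable.aemeasurable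
    have hβ' := hβ.aestronglyMeasurable.aemeasurable
    have hh' := hh.aestronglyMeasurable.aemeasurable
    exact ((((hα'.add (hβ'.const_mul t)).ballProj (hz'.add (hh'.const_smul t))).sub
      (hα'.ballProj hz')).const_smul t⁻¹).aestronglyMeasurable
  have hDmeas := aestronglyMeasurable_of_tendsto_ae _ hQmeas (ae_of_all μ hQlim)
  have hdom : MemLp (fun x => 2 * (|β x| + ‖h x‖)) 2 μ := (hβ.abs.add hh.norm).const_mul 2
  have hlim (x : S) : Tendsto (fun t => Q t x - ballProjDeriv (α x) (z x) (β x) (h x))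
      (𝓝[>] 0) (𝓝 0) := by
    simpa only [sub_self] using (hQlim x).sub_const (ballProjDeriv (α x) (z x) (β x) (h x))
  refine tendsto_eLpNorm_of_dominated_convergence ENNReal.ofNat_ne_top
    (Eventually.of_forall fun t => (hQmeas t).sub hDmeas) hdom ?_ (ae_of_all μ hlim)
  filter_upwards [self_mem_nhdsWithin] with t (ht : 0 < t)
  refine ae_of_all μ fun x => (norm_sub_le _ _).trans ?_
  linarith [norm_smul_ballProj_sub_le (hαpos x).le ht (z x) (β x) (h x),
    norm_ballProjDeriv_le (hαpos x) (z x) (β x) (h x)]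

/-- Directional differentiability of the Nemytskij operator induced by the ball
projection, on `L²(S; ℝ₊*) × L²(S; ℝⁿ)`: the difference quotients converge strongly in
`L²(S; ℝⁿ)` to the pointwise directional derivative. -/
theorem nemytskij_ballProj_dirDiff
    {S : Type*} [MeasurableSpace S] (μ : Measure S) [IsFiniteMeasure μ]
    (n : ℕ) (hn : 1 ≤ n)
    (α : S → ℝ) (hαpos : ∀ x, 0 < α x) (hα : MemLp α 2 μ)
    (z : S → EuclideanSpace ℝ (Fin n)) (hz : MemLp z 2 μ)
    (β : S → ℝ) (hβ : MemLp β 2 μ)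
    (h : S → EuclideanSpace ℝ (Fin n)) (hh : MemLp h 2 μ) :
    Tendsto
      (fun t : ℝ => eLpNorm
        (fun x => t⁻¹ • (ballProj (α x + t * β x) (z x + t • h x) - ballProj (α x) (z x))
          - ballProjDeriv (α x) (z x) (β x) (h x)) 2 μ)
      (𝓝[>] (0 : ℝ)) (𝓝 0) :=
  nemytskij_ballProj_dirDiff_general μ n α hαpos hα z hz β hβ h hh
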